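/- Let A be a bounded linear operator on H and let t ∈ (0,1). Then the following are equivalent: (1) ‖A‖_{t-ber} = ‖A‖_ber; (2) there exist sequences (τ_n) and (η_n) in Ω such that lim_{n→∞} |⟨A k_{τ_n}, k_{η_n}⟩| = lim_{n→∞} |⟨A* k_{τ_n}, k_{η_n}⟩| = ‖A‖_ber. -/
import Mathlib


open ContinuousLinearMap
open scoped InnerProductSpace

/-- The `t`-Berezin norm of `A` with respect to the family `k` of (normalized reproducing
kernel) vectors. -/
noncomputable def tber {E : Type*} [NormedAddCommGroup E] [InnerProductSpace ℂ E]
    [CompleteSpace E] {ι : Type*} (k : ι → E) (t : ℝ) (A : E →L[ℂ] E) : ℝ :=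
  ⨆ p : ι × ι, (t * ‖⟪A (k p.1), k p.2⟫_ℂ‖ + (1 - t) * ‖⟪adjoint A (k p.1), k p.2⟫_ℂ‖)

/-- The Berezin norm of `A` with respect to the family `k`. -/
noncomputable def berNorm {E : Type*} [NormedAddCommGroup E] [InnerProductSpace ℂ E]
    {ι : Type*} (k : ι → E) (A : E →L[ℂ] E) : ℝ :=
  ⨆ p : ι × ι, ‖⟪A (k p.1), k p.2⟫_ℂ‖

/-- The Berezin number of `A` with respect to the family `k`. -/
noncomputable def berNum {E : Type*} [NormedAddCommGroup E] [InnerProductSpace ℂ E]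
    {ι : Type*} (k : ι → E) (A : E →L[ℂ] E) : ℝ :=
  ⨆ l : ι, ‖⟪A (k l), k l⟫_ℂ‖

/-- The modulus `|A| = (A*A)^(1/2)` of an operator, via the continuous functional calculus. -/
noncomputable def absOp {H : Type*} [NormedAddCommGroup H] [InnerProductSpace ℂ H]
    [CompleteSpace H] (A : H →L[ℂ] H) : H →L[ℂ] H :=
  cfc Real.sqrt (adjoint A * A)

/-- Real powers of a (positive) operator via the continuous functional calculus. -/
noncomputable def rpowOp {H : Type*} [NormedAddCommGroup H] [InnerProductSpace ℂ H]
    [CompleteSpace H] (A : H →L[ℂ] H) (r : ℝ) : H →L[ℂ] H :=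
  cfc (fun x : ℝ => x ^ r) A

open Filter in
theorem stmt2 {H : Type*} [NormedAddCommGroup H] [InnerProductSpace ℂ H] [CompleteSpace H]
    {Ω : Type*} [Nonempty Ω] (k : Ω → H) (hk : ∀ l, ‖k l‖ = 1)
    (t : ℝ) (ht : t ∈ Set.Ioo (0 : ℝ) 1) (A : H →L[ℂ] H) :
    tber k t A = berNorm k A ↔
      ∃ τ η : ℕ → Ω,
        Tendsto (fun n => ‖⟪A (k (τ n)), k (η n)⟫_ℂ‖) atTop (nhds (berNorm k A)) ∧
        Tendsto (fun n => ‖⟪adjoint A (k (τ n)), k (η n)⟫_ℂ‖) atTop (nhds (berNorm k A)) := by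

  obtain ⟨ht0, ht1⟩ := ht
  set F : Ω × Ω → ℝ := fun p => ‖⟪A (k p.1), k p.2⟫_ℂ‖ with hF
  have hFle : ∀ p, F p ≤ ‖A‖ := by
    intro p
    calc F p ≤ ‖A (k p.1)‖ * ‖k p.2‖ := norm_inner_le_norm _ _
    _ = ‖A (k p.1)‖ := by rw [hk, mul_one]
    _ ≤ ‖A‖ * ‖k p.1‖ := A.le_opNorm _
    _ = ‖A‖ := by rw [hk, mul_one]
  have hFbdd : BddAbove (Set.range F) := ⟨‖A‖, by rintro _ ⟨p, rfl⟩; exact hFle p⟩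
  have hadj : ∀ p : Ω × Ω, ‖⟪adjoint A (k p.1), k p.2⟫_ℂ‖ = F (p.2, p.1) := by
    intro p
    rw [adjoint_inner_left]
    exact norm_inner_symm _ _
  set B := berNorm k A with hBdef
  have hFleB : ∀ p, F p ≤ B := fun p => le_ciSup hFbdd p
  set G : Ω × Ω → ℝ := fun p => t * F p + (1 - t) * F (p.2, p.1) with hG
  have htber_eq : tber k t A = ⨆ p : Ω × Ω, G p := by
    unfold tber
    congr 1
    funext p
    rw [hadj p]
  have hGleB : ∀ p, G p ≤ B := by
    intro p
    calc G p ≤ t * B + (1 - t) * B := by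
          exact add_le_add (mul_le_mul_of_nonneg_left (hFleB p) ht0.le)
            (mul_le_mul_of_nonneg_left (hFleB (p.2, p.1)) (by linarith))
    _ = B := by ring
  have hGbdd : BddAbove (Set.range G) := ⟨B, by rintro _ ⟨p, rfl⟩; exact hGleB p⟩
  have htber_le : tber k t A ≤ B := htber_eq ▸ ciSup_le hGleB
  constructor
  · intro h
    have hSne : (Set.range G).Nonempty := Set.range_nonempty G
    obtain ⟨u, -, hu, hum⟩ := exists_seq_tendsto_sSup hSne hGbdd
    have huB : Tendsto u atTop (nhds B) := by
      have : sSup (Set.range G) = B := by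
        rw [← h, htber_eq]; rfl
      rwa [this] at hu
    choose p hp using hum
    have squeeze : ∀ (c : ℝ), 0 < c → ∀ v : ℕ → ℝ, (∀ n, v n ≤ B) →
        (∀ n, u n ≤ c * v n + (1 - c) * B) → Tendsto v atTop (nhds B) := by
      intro c hc v hv hle
      have hlow : ∀ n, (u n - (1 - c) * B) / c ≤ v n := by
        intro n
        rw [div_le_iff₀ hc]
        have := hle n
        nlinarith
      have hl : Tendsto (fun n => (u n - (1 - c) * B) / c) atTop
          (nhds ((B - (1 - c) * B) / c)) := (huB.sub tendsto_const_nhds).div_const c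
      have heq : (B - (1 - c) * B) / c = B := by field_simp; ring
      rw [heq] at hl
      exact tendsto_of_tendsto_of_tendsto_of_le_of_le hl tendsto_const_nhds hlow hv
    refine ⟨fun n => (p n).1, fun n => (p n).2, ?_, ?_⟩
    · have := squeeze t ht0 (fun n => F (p n)) (fun n => hFleB (p n))
        (fun n => by rw [← hp n]; have := hFleB ((p n).2, (p n).1); simp only [hG]; nlinarith)
      exact this
    · have h2 := squeeze (1 - t) (by linarith) (fun n => F ((p n).2, (p n).1))
        (fun n => hFleB _)
        (fun n => by rw [← hp n]; have := hFleB (p n); simp only [hG]; nlinarith)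
      have : (fun n => ‖⟪adjoint A (k ((p n).1)), k ((p n).2)⟫_ℂ‖) =
          fun n => F ((p n).2, (p n).1) := by
        funext n; exact hadj (p n)
      rw [this]
      exact h2
  · rintro ⟨τ, η, h1, h2⟩
    refine le_antisymm htber_le ?_
    have h2' : Tendsto (fun n => F (η n, τ n)) atTop (nhds B) := by
      have : (fun n => ‖⟪adjoint A (k (τ n)), k (η n)⟫_ℂ‖) =
          fun n => F (η n, τ n) := by
        funext n; exact hadj (τ n, η n)
      rwa [this] at h2
    have hseq : Tendsto (fun n => G (τ n, η n)) atTop (nhds B) := by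
      have := (h1.const_mul t).add (h2'.const_mul (1 - t))
      have heq : t * B + (1 - t) * B = B := by ring
      rw [heq] at this
      exact this
    refine le_of_tendsto hseq (Filter.Eventually.of_forall fun n => ?_)
    calc G (τ n, η n) ≤ ⨆ p : Ω × Ω, G p := le_ciSup hGbdd _
    _ = tber k t A := htber_eq.symm
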